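/- (Massart's lemma) Let A ⊆ ℝ^m be a finite set with max_{a∈A} ‖a‖₂ ≤ r. Then E_σ[max_{a∈A} ⟨σ, a⟩] ≤ r·√(2 log |A|), where σ is uniform on {±1}^m. -/

import Mathlib

/-!
Exponentiate. By Jensen, `exp (t · E max) ≤ E exp (t · max) ≤ ∑_{a ∈ A} E exp (t ⟨σ, a⟩)`, and the
Rademacher moment generating function `E exp (t ⟨σ, a⟩) = ∏ cosh (t aᵢ)` is at most
`exp (t² ‖a‖² / 2)`. Hence `t · E max ≤ log |A| + t² r² / 2` for every real `t` (no sign condition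
is needed), so this quadratic in `t` has nonpositive discriminant, which is the claim.
-/

open Finset Real

theorem exp_mul_sup'_le_sum_exp {α : Type*} (s : Finset α) (hs : s.Nonempty) (f : α → ℝ)
    (t : ℝ) : exp (t * s.sup' hs f) ≤ ∑ a ∈ s, exp (t * f a) := by
  obtain ⟨a, ha, hmax⟩ := s.exists_mem_eq_sup' hs f
  rw [hmax]
  exact single_le_sum (f := fun a => exp (t * f a)) (fun x _ => (exp_pos _).le) ha

theorem exp_average_le_average_exp {β : Type*} [Fintype β] [Nonempty β] (f : β → ℝ) :
    exp ((Fintype.card β : ℝ)⁻¹ * ∑ x, f x) ≤ (Fintype.card β : ℝ)⁻¹ * ∑ x, exp (f x) := by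
  have hcard : (Fintype.card β : ℝ) ≠ 0 := by positivity
  have := convexOn_exp.map_sum_le (t := univ) (w := fun _ => (Fintype.card β : ℝ)⁻¹) (p := f)
    (fun _ _ => by positivity) (by simp [card_univ, hcard]) (fun _ _ => Set.mem_univ _)
  simpa only [smul_eq_mul, ← mul_sum] using this

def signedSum {ι : Type*} [Fintype ι] (b : ι → Bool) (a : ι → ℝ) : ℝ :=
  ∑ i, (if b i then 1 else -1) * a i

section Rademacher

variable {ι : Type*} [Fintype ι] [DecidableEq ι]

theorem sum_exp_mul_signedSum (a : ι → ℝ) (t : ℝ) :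
    ∑ b : ι → Bool, exp (t * signedSum b a) = ∏ i, 2 * cosh (t * a i) := by
  simp_rw [signedSum, mul_sum, exp_sum]
  rw [← Fintype.prod_sum fun i (s : Bool) => exp (t * ((if s then 1 else -1) * a i))]
  refine prod_congr rfl fun i _ => ?_
  rw [Fintype.sum_bool, cosh_eq]
  simp only [if_true, Bool.false_eq_true, if_false]
  ring_nf

theorem sum_exp_mul_signedSum_le (a : ι → ℝ) (t : ℝ) :
    ∑ b : ι → Bool, exp (t * signedSum b a) ≤
      2 ^ Fintype.card ι * exp (t ^ 2 * (∑ i, a i ^ 2) / 2) := by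
  calc ∑ b : ι → Bool, exp (t * signedSum b a)
      = ∏ i, 2 * cosh (t * a i) := sum_exp_mul_signedSum a t
    _ ≤ ∏ i, 2 * exp ((t * a i) ^ 2 / 2) :=
        prod_le_prod (fun i _ => by positivity)
          fun i _ => mul_le_mul_of_nonneg_left (cosh_le_exp_half_sq _) zero_le_two
    _ = 2 ^ Fintype.card ι * exp (t ^ 2 * (∑ i, a i ^ 2) / 2) := by
        rw [prod_mul_distrib, prod_const, card_univ, ← exp_sum, mul_sum, sum_div]
        simp_rw [mul_pow]

theorem mul_average_sup'_signedSum_le (A : Finset (ι → ℝ)) (hA : A.Nonempty) (c : ℝ) (hc : ∀ a ∈ A, ∑ i, a i ^ 2 ≤ c) (t : ℝ) :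
    t * ((1 / 2 ^ Fintype.card ι) * ∑ b : ι → Bool, A.sup' hA (signedSum b)) ≤
      log A.card + t ^ 2 * c / 2 := by
  set N : ℝ := 2 ^ Fintype.card ι
  have hN : (Fintype.card (ι → Bool) : ℝ) = N := by simp [N]
  have hcard : (0 : ℝ) < A.card := by exact_mod_cast hA.card_pos
  rw [← exp_le_exp, exp_add, exp_log hcard]
  calc exp (t * ((1 / N) * ∑ b : ι → Bool, A.sup' hA (signedSum b)))
      = exp ((1 / N) * ∑ b : ι → Bool, t * A.sup' hA (signedSum b)) := by
        rw [mul_sum, mul_sum, mul_sum]; simp_rw [mul_left_comm t]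
    _ ≤ (1 / N) * ∑ b : ι → Bool, exp (t * A.sup' hA (signedSum b)) := by
        simpa only [hN, one_div] using
          exp_average_le_average_exp fun b : ι → Bool => t * A.sup' hA (signedSum b)
    _ ≤ (1 / N) * ∑ b : ι → Bool, ∑ a ∈ A, exp (t * signedSum b a) := by
        gcongr with b; exact exp_mul_sup'_le_sum_exp A hA _ t
    _ = ∑ a ∈ A, (1 / N) * ∑ b : ι → Bool, exp (t * signedSum b a) := by
        rw [sum_comm, mul_sum]
    _ ≤ ∑ a ∈ A, exp (t ^ 2 * c / 2) := by
        refine sum_le_sum fun a ha => ?_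
        rw [one_div, inv_mul_le_iff₀ (by positivity)]
        refine (sum_exp_mul_signedSum_le a t).trans ?_
        gcongr
        exact hc a ha
    _ = A.card * exp (t ^ 2 * c / 2) := by rw [sum_const, nsmul_eq_mul]

end Rademacher

theorem le_mul_sqrt_of_forall_mul_le {S r L : ℝ} (hr : 0 ≤ r) (hL : 0 ≤ L)
    (h : ∀ t, t * S ≤ L + t ^ 2 * r ^ 2 / 2) : S ≤ r * √(2 * L) := by
  have hdiscrim : discrim (r ^ 2 / 2) (-S) L ≤ 0 :=
    discrim_le_zero fun t => by linarith [h t]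
  have hsq : S ^ 2 ≤ (r * √(2 * L)) ^ 2 := by
    rw [discrim] at hdiscrim
    rw [mul_pow, sq_sqrt (by positivity)]
    linarith
  exact (le_abs_self S).trans (abs_le_of_sq_le_sq hsq (by positivity))

theorem stmt_17 (m : ℕ) (r : ℝ) (A : Finset (Fin m → ℝ)) (hA : A.Nonempty)
    (hr : ∀ a ∈ A, Real.sqrt (∑ i, a i ^ 2) ≤ r) :
    (1 / 2 ^ m) *
        ∑ b : Fin m → Bool,
          A.sup' hA (fun a => ∑ i, (if b i then (1 : ℝ) else -1) * a i)
      ≤ r * Real.sqrt (2 * Real.log A.card) := by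
  have hr0 : 0 ≤ r := let ⟨a₀, ha₀⟩ := hA; (sqrt_nonneg _).trans (hr a₀ ha₀)
  have hsq : ∀ a ∈ A, ∑ i, a i ^ 2 ≤ r ^ 2 := fun a ha => (sqrt_le_left hr0).mp (hr a ha)
  have hlog : 0 ≤ log A.card := log_nonneg (by exact_mod_cast hA.card_pos)
  refine le_mul_sqrt_of_forall_mul_le hr0 hlog fun t => ?_
  have := mul_average_sup'_signedSum_le A hA (r ^ 2) hsq t
  rwa [Fintype.card_fin] at this
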